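/- Let k ≥ 1, let w ∈ {right, down}^{k−1} be the step word of an abstract G-stair Γ, let d be its number of down steps (so Γ has height d + 1), and let L = w ++ [down] ++ w be the step word of the increasing linking stair of Γ. For every m with 0 ≤ m ≤ k−1, the number of down steps among L_m, …, L_{m+k−2} equals d + 1 if L_{m+k−1} is a right step, and equals d if L_{m+k−1} is a down step. Equivalently (equivalence (2) ⟺ (3) of the Proposition on increasing linking stairs): a G-substair Γ′ of the increasing linking stair of Γ satisfies height(Γ′) = height(Γ) + 1 if and only if Γ′ has a vertical right cut. -/

import Mathlib

/-- A step of a stair: a right step `+(1,0)` or a down step `+(0,-1)`. -/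
inductive Step
  | right
  | down
deriving DecidableEq, BEq

/-!
Write `u = w ++ [down]`. The window of length `k` starting at position `m ≤ k - 1` of
`L = w ++ [down] ++ w` is the rotation of `u` by `m`, so it has exactly `d + 1` down steps.
The step word of the `G`-substair at position `m` is this window without its last letter
`L_{m+k-1}`, so it has `d + 1` down steps if that letter is a right step and `d` if it is a
down step.
-/

namespace List

variable {α : Type*}

theorem take_drop_append_singleton_append_eq_rotate (w : List α) (a : α) {m : ℕ}
    (hm : m ≤ w.length) :
    ((w ++ [a] ++ w).drop m).take (w.length + 1) = (w ++ [a]).rotate m := by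
  have hm' : m ≤ (w ++ [a]).length := by simp only [length_append, length_singleton]; omega
  rw [rotate_eq_drop_append_take hm', drop_append_of_le_length hm', take_append,
    take_append_of_le_length hm]
  simp only [length_drop, length_append, length_singleton]
  rw [take_of_length_le (by simp only [length_drop, length_append, length_singleton]; omega)]
  congr 2
  omega

theorem count_take_drop_add_count_getElem? [BEq α] (l : List α) (a : α) (m n : ℕ) :
    ((l.drop m).take n).count a + l[m + n]?.toList.count a
      = ((l.drop m).take (n + 1)).count a := by
  rw [take_add_one, getElem?_drop, count_append]

theorem count_take_drop_append_singleton_append [BEq α] (w : List α) (a b : α) {m : ℕ}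
    (hm : m ≤ w.length) :
    (((w ++ [a] ++ w).drop m).take w.length).count b + (w ++ [a] ++ w)[m + w.length]?.toList.count b
      = (w ++ [a]).count b := by
  rw [count_take_drop_add_count_getElem?, take_drop_append_singleton_append_eq_rotate w a hm,
    (rotate_perm _ _).count_eq]

end List

theorem stmt5_general (k : ℕ) (w : List Step) (hw : w.length = k - 1)
    (d : ℕ) (hd : d = w.count Step.down)
    (L : List Step) (hL : L = w ++ [Step.down] ++ w)
    (m : ℕ) (hmk : m ≤ k - 1) :
    (L[m + k - 1]? = some Step.right → ((L.drop m).take (k - 1)).count Step.down = d + 1) ∧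
    (L[m + k - 1]? = some Step.down → ((L.drop m).take (k - 1)).count Step.down = d) := by
  have hcut : m + w.length = m + k - 1 := by omega
  have key := List.count_take_drop_append_singleton_append w Step.down Step.down (hw ▸ hmk)
  rw [List.count_append, ← hd, ← hL, hcut, hw] at key
  constructor <;> intro hstep <;> rw [hstep] at key <;>
    simp +decide [List.count_singleton] at key <;> omega

/-- Let `w` be the step word (of length `k-1`) of an abstract `G`-stair with
`d` down steps (so height `d+1`), and let `L = w ++ [down] ++ w` be the step word of its
increasing linking stair.  For `0 ≤ m ≤ k-1`, the number of down steps among `L_m, …, L_{m+k-2}`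
(the step word of the `G`-substair at position `m`) equals `d + 1` if `L_{m+k-1}` is a right
step (vertical right cut) and `d` if `L_{m+k-1}` is a down step (horizontal right cut). -/
theorem stmt5 (k : ℕ) (hk : 1 ≤ k) (w : List Step) (hw : w.length = k - 1)
    (d : ℕ) (hd : d = w.count Step.down)
    (L : List Step) (hL : L = w ++ [Step.down] ++ w)
    (m : ℕ) (hmk : m ≤ k - 1) :
    (L[m + k - 1]? = some Step.right → ((L.drop m).take (k - 1)).count Step.down = d + 1) ∧
    (L[m + k - 1]? = some Step.down → ((L.drop m).take (k - 1)).count Step.down = d) :=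
  stmt5_general k w hw d hd L hL m hmk
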